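/- Let G be a contracting self-similar subgroup of Aut(T) and let H be a finite subset of G. Then the set of all elements of the form (((h₁|_{x₁}·h₂)|_{x₂}·h₃)|_{x₃}·…·h_n)|_{x_n}, over all n ≥ 1, h₁,…,h_n ∈ H and x₁,…,x_n ∈ X, is finite; likewise the set of all elements of the form (h_n·…·(h₃·(h₂·h₁|_{x₁})|_{x₂})|_{x₃}…)|_{x_n} is finite. -/

import Mathlib

open List

/-- Vertices of the rooted `d`-ary tree `T`: finite words over the alphabet
`X = Fin d`. -/
abbrev Vertex (d : ℕ) := List (Fin d)

/-- `g` is an automorphism of the rooted `d`-ary tree: a bijection of the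
vertex set `X*` preserving word length and the prefix relation. -/
def IsTreeAut {d : ℕ} (g : Equiv.Perm (Vertex d)) : Prop :=
  (∀ v : Vertex d, (g v).length = v.length) ∧
    ∀ v w : Vertex d, g v <+: g (v ++ w)

theorem IsTreeAut.prefix_mono {d : ℕ} {g : Equiv.Perm (Vertex d)} (hg : IsTreeAut g)
    {u u' : Vertex d} (h : u <+: u') : g u <+: g u' := by
  obtain ⟨t, rfl⟩ := h
  exact hg.2 u t

/-- The automorphism group `Aut(T)` of the rooted `d`-ary tree, as a subgroup
of the group of permutations of the vertex set. -/
def treeAut (d : ℕ) : Subgroup (Equiv.Perm (Vertex d)) where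
  carrier := {g | IsTreeAut g}
  one_mem' := ⟨fun _ => rfl, fun v w => ⟨w, rfl⟩⟩
  mul_mem' := by
    intro g h hg hh
    obtain ⟨hg1, hg2⟩ := hg
    obtain ⟨hh1, hh2⟩ := hh
    refine ⟨fun v => ?_, fun v w => ?_⟩
    · simp [Equiv.Perm.mul_apply, hg1, hh1]
    · obtain ⟨t, ht⟩ := hh2 v w
      simp only [Equiv.Perm.mul_apply]
      rw [← ht]
      exact hg2 (h v) t
  inv_mem' := by
    intro g hgmem
    obtain ⟨hg1, hg2⟩ := hgmem
    have hg : IsTreeAut g := ⟨hg1, hg2⟩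
    have hlen' : ∀ v : Vertex d, (g⁻¹ v).length = v.length := by
      intro v
      conv_rhs => rw [← (show ∀ x : Vertex d, g (g⁻¹ x) = x from fun x => Equiv.apply_symm_apply g x) v]
      rw [hg1]
    refine ⟨hlen', fun v w => ?_⟩
    have hle : (g⁻¹ v).length ≤ (g⁻¹ (v ++ w)).length := by
      have h1 := hlen' v
      have h2 := hlen' (v ++ w)
      rw [List.length_append] at h2
      omega
    have htp : (g⁻¹ (v ++ w)).take (g⁻¹ v).length <+: g⁻¹ (v ++ w) :=
      List.take_prefix _ _
    have hgtp : g ((g⁻¹ (v ++ w)).take (g⁻¹ v).length) <+: v ++ w := by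
      have := hg.prefix_mono htp
      rwa [(show ∀ x : Vertex d, g (g⁻¹ x) = x from fun x => Equiv.apply_symm_apply g x)] at this
    have hlen_tp : (g ((g⁻¹ (v ++ w)).take (g⁻¹ v).length)).length = v.length := by
      rw [hg1, List.length_take, min_eq_left hle, hlen' v]
    have hveq : g ((g⁻¹ (v ++ w)).take (g⁻¹ v).length) = v := by
      have h1 := List.prefix_iff_eq_take.mp hgtp
      have h2 := List.prefix_iff_eq_take.mp (List.prefix_append v w)
      rw [h1, hlen_tp]
      exact h2.symm
    have hkey : (g⁻¹ (v ++ w)).take (g⁻¹ v).length = g⁻¹ v := by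
      apply g.injective
      rw [hveq, (show ∀ x : Vertex d, g (g⁻¹ x) = x from fun x => Equiv.apply_symm_apply g x)]
    rw [← hkey]
    exact htp

open scoped Classical in
/-- The state (section) `g|_v` of `g` at the vertex `v` : the unique
automorphism satisfying `g (v ++ w) = g v ++ (g|_v) w` for all `w`. -/
noncomputable def state {d : ℕ} (g : Equiv.Perm (Vertex d)) (v : Vertex d) :
    Equiv.Perm (Vertex d) :=
  if h : Function.Bijective (fun w : Vertex d => (g (v ++ w)).drop v.length) then
    Equiv.ofBijective _ h
  else 1

/-- A finite-state automorphism: one having finitely many states.  The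
finite-state automorphisms form the group `F(X)`. -/
def FiniteState {d : ℕ} (g : Equiv.Perm (Vertex d)) : Prop :=
  (Set.range fun v : Vertex d => state g v).Finite

/-- The cardinality of the orbit `Orb_a(v)` of the vertex `v` under the cyclic
group generated by `a`. -/
noncomputable def orbitCard {d : ℕ} (a : Equiv.Perm (Vertex d)) (v : Vertex d) : ℕ :=
  Nat.card (Set.range fun n : ℤ => (a ^ n) v)

/-- The orbit-signalizer `OS(a) = { a^m|_v : v ∈ X^*, m = |Orb_a(v)| }`. -/
noncomputable def OS {d : ℕ} (a : Equiv.Perm (Vertex d)) : Set (Equiv.Perm (Vertex d)) :=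
  {s | ∃ v : Vertex d, s = state (a ^ orbitCard a v) v}

/-- `a` has finite orbit-signalizer. -/
def FiniteOS {d : ℕ} (a : Equiv.Perm (Vertex d)) : Prop := (OS a).Finite

/-- A self-similar (state-closed) subgroup. -/
def SelfSimilar {d : ℕ} (G : Subgroup (Equiv.Perm (Vertex d))) : Prop :=
  ∀ g ∈ G, ∀ v : Vertex d, state g v ∈ G

/-- A contracting group: there is a finite set `N ⊆ G` such that every
`g ∈ G` has all its states in `N` from some level on. -/
def ContractingGroup {d : ℕ} (G : Subgroup (Equiv.Perm (Vertex d))) : Prop :=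
  ∃ N : Set (Equiv.Perm (Vertex d)), N.Finite ∧ N ⊆ (G : Set (Equiv.Perm (Vertex d))) ∧
    ∀ g ∈ G, ∃ n : ℕ, ∀ v : Vertex d, n ≤ v.length → state g v ∈ N

/-- A contracting automorphism: the self-similar group generated by all of its
states is contracting. -/
def ContractingAut {d : ℕ} (f : Equiv.Perm (Vertex d)) : Prop :=
  ContractingGroup (Subgroup.closure (Set.range fun v : Vertex d => state f v))

/-- The activity sequence `θ_k(g)`: the number of vertices `v` of level `k`
whose state `g|_v` acts nontrivially on the first level `X`. -/
noncomputable def theta {d : ℕ} (g : Equiv.Perm (Vertex d)) (k : ℕ) : ℕ :=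
  Nat.card {v : Vertex d // v.length = k ∧ ∃ x : Fin d, state g v [x] ≠ [x]}

/-- A bounded automorphism: a finite-state automorphism with bounded activity
sequence.  The bounded automorphisms form the group `Pol(0)`. -/
def BoundedAut {d : ℕ} (g : Equiv.Perm (Vertex d)) : Prop :=
  FiniteState g ∧ ∃ C : ℕ, ∀ k : ℕ, theta g k ≤ C

/-- A polynomial automorphism (an element of `Pol(∞)`): a finite-state
automorphism whose activity sequence is polynomially bounded. -/
def PolyAut {d : ℕ} (g : Equiv.Perm (Vertex d)) : Prop :=
  FiniteState g ∧ ∃ p : Polynomial ℕ, ∀ k : ℕ, theta g k ≤ p.eval k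

/-- A finitary automorphism (an element of `Pol(-1)`): all states at some
level are trivial. -/
def Finitary {d : ℕ} (g : Equiv.Perm (Vertex d)) : Prop :=
  ∃ k : ℕ, ∀ v : Vertex d, v.length = k → state g v = 1

/-- A functionally recursive automorphism: a member of some finitely generated
self-similar subgroup of `Aut(T)`.  These form the group `FR(X)`. -/
def FunctionallyRecursive {d : ℕ} (g : Equiv.Perm (Vertex d)) : Prop :=
  ∃ G : Subgroup (Equiv.Perm (Vertex d)), G ≤ treeAut d ∧ SelfSimilar G ∧
    (∃ S : Set (Equiv.Perm (Vertex d)), S.Finite ∧ G = Subgroup.closure S) ∧ g ∈ G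
/-- Left-nested products: `leftNest h₁ [(x₁,h₂),…,(x_{n-1},h_n)] x_n` is the
element `(((h₁|_{x₁}·h₂)|_{x₂}·h₃)|_{x₃}·…·h_n)|_{x_n}` (written here in the
left-action convention, so the paper's product `g·h` is `h * g`). -/
noncomputable def leftNest {d : ℕ} (h : Equiv.Perm (Vertex d)) :
    List (Fin d × Equiv.Perm (Vertex d)) → Fin d → Equiv.Perm (Vertex d)
  | [], x => state h ([x] : Vertex d)
  | (x, h') :: l, y => leftNest (h' * state h ([x] : Vertex d)) l y

/-- Right-nested products: `rightNest h₁ [(x₁,h₂),…,(x_{n-1},h_n)] x_n` is the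
element `(h_n·…·(h₃·(h₂·h₁|_{x₁})|_{x₂})|_{x₃}…)|_{x_n}` (in the left-action
convention, the paper's product `g·h` being `h * g`). -/
noncomputable def rightNest {d : ℕ} (h : Equiv.Perm (Vertex d)) :
    List (Fin d × Equiv.Perm (Vertex d)) → Fin d → Equiv.Perm (Vertex d)
  | [], x => state h ([x] : Vertex d)
  | (x, h') :: l, y => rightNest (state h ([x] : Vertex d) * h') l y

/-
Let `N` be the nucleus and `W` the (finite) set of all states of `1` and of the elements of `N ∪ H`;
it is closed under taking states. By contraction there is a level `k` from which on every state of
a product of two elements of `W` lies in `N ⊆ W`, so a state at level `k` of a product of `2k`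
elements of `W` is a product of `k` of them. Along a left-nested product the current element keeps
the shape `h * r * p|_v` with `h ∈ H`, `|v| < k`, `r` a product of `|v|` and `p` a product of `2k`
elements of `W`: one step lengthens `v` and `r` by one, and when `|v|` reaches `k` the contraction
of `p` frees enough room to restart with `v` empty. Hence all left-nested products are products of
at most `3k` elements of `W`. Right-nested products over `H` are inverses of left-nested products
over `H⁻¹`.
-/

open scoped Pointwise

theorem Set.Finite.pow {M : Type*} [Monoid M] {s : Set M} (hs : s.Finite) (n : ℕ) :
    (s ^ n).Finite := by
  induction n with
  | zero => simp
  | succ n ih => rw [pow_succ]; exact ih.mul hs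

section TreeAut

variable {d : ℕ}

local notation "Aut" => Equiv.Perm (Vertex d)

lemma length_apply_of_mem_treeAut {g : Aut} (hg : g ∈ treeAut d) (v : Vertex d) :
    (g v).length = v.length :=
  hg.1 v

lemma apply_append_eq_append_drop {g : Aut} (hg : g ∈ treeAut d) (v w : Vertex d) :
    g (v ++ w) = g v ++ (g (v ++ w)).drop v.length := by
  obtain ⟨t, ht⟩ := hg.2 v w
  rw [← ht, ← length_apply_of_mem_treeAut hg v, List.drop_left]

lemma bijective_drop_apply_append {g : Aut} (hg : g ∈ treeAut d) (v : Vertex d) :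
    Function.Bijective fun w : Vertex d => (g (v ++ w)).drop v.length := by
  refine ⟨fun w w' h => ?_, fun t => ?_⟩
  · have : g (v ++ w) = g (v ++ w') := by
      rw [apply_append_eq_append_drop hg, apply_append_eq_append_drop hg v w']
      exact congrArg _ h
    exact List.append_cancel_left (g.injective this)
  · obtain ⟨w, hw⟩ := ((treeAut d).inv_mem hg).2 (g v) t
    simp only [Equiv.Perm.coe_inv, Equiv.symm_apply_apply] at hw
    refine ⟨w, ?_⟩
    simp only [hw, Equiv.apply_symm_apply, ← length_apply_of_mem_treeAut hg v, List.drop_left]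

lemma state_apply {g : Aut} (hg : g ∈ treeAut d) (v w : Vertex d) :
    state g v w = (g (v ++ w)).drop v.length := by
  rw [state, dif_pos (bijective_drop_apply_append hg v)]
  rfl

lemma apply_append {g : Aut} (hg : g ∈ treeAut d) (v w : Vertex d) :
    g (v ++ w) = g v ++ state g v w := by
  rw [state_apply hg]
  exact apply_append_eq_append_drop hg v w

lemma state_eq_of_forall_apply_append {g e : Aut} (hg : g ∈ treeAut d) (v : Vertex d)
    (he : ∀ w, g (v ++ w) = g v ++ e w) : state g v = e :=
  Equiv.ext fun w => List.append_cancel_left ((apply_append hg v w).symm.trans (he w))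

lemma state_mem_treeAut {g : Aut} (hg : g ∈ treeAut d) (v : Vertex d) :
    state g v ∈ treeAut d := by
  refine ⟨fun w => ?_, fun w u => ?_⟩
  · rw [state_apply hg, List.length_drop, length_apply_of_mem_treeAut hg, List.length_append]
    omega
  · have hpre := hg.2 (v ++ w) u
    rw [List.append_assoc, apply_append hg v (w ++ u), apply_append hg v w] at hpre
    exact (List.prefix_append_right_inj _).mp hpre

lemma state_mul {g f : Aut} (hg : g ∈ treeAut d) (hf : f ∈ treeAut d) (v : Vertex d) :
    state (g * f) v = state g (f v) * state f v :=
  state_eq_of_forall_apply_append ((treeAut d).mul_mem hg hf) v fun w => by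
    simp only [Equiv.Perm.mul_apply, apply_append hf v w, apply_append hg (f v)]

lemma state_state {g : Aut} (hg : g ∈ treeAut d) (v w : Vertex d) :
    state (state g v) w = state g (v ++ w) :=
  state_eq_of_forall_apply_append (state_mem_treeAut hg v) w fun u =>
    List.append_cancel_left (as := g v) <| by
      rw [← apply_append hg, ← List.append_assoc v, apply_append hg (v ++ w), apply_append hg v w,
        List.append_assoc]

lemma state_one (v : Vertex d) : state (1 : Aut) v = 1 :=
  state_eq_of_forall_apply_append (treeAut d).one_mem v fun _ => rfl

lemma state_nil {g : Aut} (hg : g ∈ treeAut d) : state g [] = g := by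
  have hnil : g [] = [] := List.eq_nil_of_length_eq_zero (length_apply_of_mem_treeAut hg [])
  exact state_eq_of_forall_apply_append hg [] fun w => by simp [hnil]

lemma state_inv {g : Aut} (hg : g ∈ treeAut d) (v : Vertex d) :
    (state g v)⁻¹ = state g⁻¹ (g v) := by
  have h := state_mul ((treeAut d).inv_mem hg) hg v
  rw [inv_mul_cancel, state_one] at h
  exact (eq_inv_of_mul_eq_one_left h.symm).symm

lemma exists_apply_singleton {g : Aut} (hg : g ∈ treeAut d) (x : Fin d) : ∃ y, g [x] = [y] :=
  List.length_eq_one_iff.mp (length_apply_of_mem_treeAut hg [x])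

lemma state_mem_pow {S T : Set Aut} (hS : S ⊆ treeAut d) {n : ℕ}
    (hST : ∀ s ∈ S, ∀ v : Vertex d, n ≤ v.length → state s v ∈ T) :
    ∀ m : ℕ, ∀ g ∈ S ^ m, ∀ v : Vertex d, n ≤ v.length → state g v ∈ T ^ m
  | 0, g, hg, v, _ => by
    rw [pow_zero, Set.mem_one] at hg ⊢
    rw [hg, state_one]
  | m + 1, g, hg, v, hv => by
    rw [pow_succ] at hg ⊢
    obtain ⟨a, ha, b, hb, rfl⟩ := hg
    rw [state_mul (Subgroup.pow_subset hS ha) (hS hb)]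
    refine Set.mul_mem_mul (state_mem_pow hS hST m a ha _ ?_) (hST b hb v hv)
    rwa [length_apply_of_mem_treeAut (hS hb)]

lemma state_mem_pow_of_forall_state_mem {W : Set Aut} (hW : W ⊆ treeAut d)
    (hWstate : ∀ w ∈ W, ∀ v : Vertex d, state w v ∈ W) {m : ℕ} {g : Aut} (hg : g ∈ W ^ m)
    (v : Vertex d) : state g v ∈ W ^ m :=
  state_mem_pow hW (fun w hw v _ => hWstate w hw v) m g hg v (Nat.zero_le _)

lemma leftNest_mem_of_forall_mul_state_mem {H M T : Set Aut}
    (hM : ∀ g ∈ M, ∀ h ∈ H, ∀ x : Fin d, h * state g [x] ∈ M)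
    (hMT : ∀ g ∈ M, ∀ x : Fin d, state g [x] ∈ T) :
    ∀ (l : List (Fin d × Aut)) {g : Aut}, g ∈ M → (∀ p ∈ l, p.2 ∈ H) → ∀ x, leftNest g l x ∈ T
  | [], _, hg, _, x => hMT _ hg x
  | (y, h) :: l, _, hg, hl, x =>
    leftNest_mem_of_forall_mul_state_mem hM hMT l (hM _ hg h (hl _ List.mem_cons_self) y)
      (fun p hp => hl p (List.mem_cons_of_mem _ hp)) x

end TreeAut

section Contraction

variable {d : ℕ}

local notation "Aut" => Equiv.Perm (Vertex d)

lemma finiteState_of_exists_state_mem {N : Set Aut} (hN : N.Finite) {g : Aut}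
    (hg : ∃ n : ℕ, ∀ v : Vertex d, n ≤ v.length → state g v ∈ N) : FiniteState g := by
  obtain ⟨n, hn⟩ := hg
  refine (((List.finite_length_lt (Fin d) n).image (state g)).union hN).subset ?_
  rintro _ ⟨v, rfl⟩
  rcases lt_or_ge v.length n with hv | hv
  · exact Or.inl ⟨v, hv, rfl⟩
  · exact Or.inr (hn v hv)

lemma exists_forall_state_mem_of_finite {G : Subgroup Aut} {N : Set Aut}
    (hcon : ∀ g ∈ G, ∃ n : ℕ, ∀ v : Vertex d, n ≤ v.length → state g v ∈ N)
    {S : Set Aut} (hS : S.Finite) (hSG : S ⊆ G) :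
    ∃ k, 0 < k ∧ ∀ g ∈ S, ∀ v : Vertex d, k ≤ v.length → state g v ∈ N := by
  have hev : ∀ g ∈ S, ∀ᶠ k in Filter.atTop, ∀ v : Vertex d, k ≤ v.length → state g v ∈ N := by
    intro g hg
    obtain ⟨n, hn⟩ := hcon g (hSG hg)
    exact Filter.eventually_atTop.2 ⟨n, fun k hk v hv => hn v (hk.trans hv)⟩
  exact ((Filter.eventually_gt_atTop 0).and ((Filter.eventually_all_finite hS).2 hev)).exists

def stateClosure (S : Set Aut) : Set Aut :=
  ⋃ g ∈ S, Set.range (state g)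

lemma subset_stateClosure {S : Set Aut} (hS : S ⊆ treeAut d) : S ⊆ stateClosure S :=
  fun _ hg => Set.mem_biUnion hg ⟨[], state_nil (hS hg)⟩

lemma state_mem_stateClosure {S : Set Aut} (hS : S ⊆ treeAut d) {g : Aut}
    (hg : g ∈ stateClosure S) (v : Vertex d) : state g v ∈ stateClosure S := by
  obtain ⟨f, hf, u, rfl⟩ := Set.mem_iUnion₂.mp hg
  exact Set.mem_biUnion hf ⟨u ++ v, (state_state (hS hf) u v).symm⟩

lemma stateClosure_subset {G : Subgroup Aut} (hss : SelfSimilar G) {S : Set Aut}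
    (hSG : S ⊆ G) : stateClosure S ⊆ G :=
  Set.iUnion₂_subset fun g hg => Set.range_subset_iff.2 (hss g (hSG hg))

def nestInvariant (H W : Set Aut) (k : ℕ) : Set Aut :=
  {g | ∃ h ∈ H, ∃ v : Vertex d, v.length < k ∧ ∃ r ∈ W ^ v.length, ∃ p ∈ W ^ (2 * k),
    g = h * r * state p v}

variable {H W : Set (Equiv.Perm (Vertex d))} {k : ℕ}

lemma mem_nestInvariant_of_mem (hW1 : (1 : Aut) ∈ W) (hk : 0 < k) {h : Aut} (hh : h ∈ H) :
    h ∈ nestInvariant H W k :=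
  ⟨h, hh, [], hk, 1, Set.one_mem_pow hW1, 1, Set.one_mem_pow hW1, by simp [state_one]⟩

lemma nestInvariant_subset_pow (hW1 : (1 : Aut) ∈ W) (hW : W ⊆ treeAut d)
    (hWstate : ∀ w ∈ W, ∀ v : Vertex d, state w v ∈ W) (hHW : H ⊆ W) :
    nestInvariant H W k ⊆ W ^ (3 * k) := by
  rintro _ ⟨h, hh, v, hv, r, hr, p, hp, rfl⟩
  have hhr : h * r ∈ W ^ k := by
    refine Set.pow_subset_pow_right hW1 hv ?_
    rw [pow_succ']
    exact Set.mul_mem_mul (hHW hh) hr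
  rw [show 3 * k = k + 2 * k by ring, pow_add]
  exact Set.mul_mem_mul hhr (state_mem_pow_of_forall_state_mem hW hWstate hp v)

lemma mul_state_mem_nestInvariant (hW : W ⊆ treeAut d)
    (hWstate : ∀ w ∈ W, ∀ v : Vertex d, state w v ∈ W) (hHW : H ⊆ W)
    (hk : ∀ g ∈ W ^ 2, ∀ v : Vertex d, k ≤ v.length → state g v ∈ W)
    {g : Aut} (hg : g ∈ nestInvariant H W k) {h' : Aut} (hh' : h' ∈ H) (x : Fin d) :
    h' * state g [x] ∈ nestInvariant H W k := by
  obtain ⟨h, hh, v, hv, r, hr, p, hp, rfl⟩ := hg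
  have hpT : p ∈ treeAut d := Subgroup.pow_subset hW hp
  have hhr : h * r ∈ W ^ (v.length + 1) := by
    rw [pow_succ']
    exact Set.mul_mem_mul (hHW hh) hr
  set r' := state (h * r) (state p v [x])
  have hr' : r' ∈ W ^ (v.length + 1) := state_mem_pow_of_forall_state_mem hW hWstate hhr _
  have hstate : state (h * r * state p v) [x] = r' * state p (v ++ [x]) := by
    rw [state_mul (Subgroup.pow_subset hW hhr) (state_mem_treeAut hpT v), state_state hpT]
  rw [hstate]
  rcases (Nat.succ_le_of_lt hv).lt_or_eq with hlt | heq
  · exact ⟨h', hh', v ++ [x], by simpa using hlt, r', by simpa using hr', p, hp, by rw [mul_assoc]⟩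
  · -- at level `k` the factor `p ∈ (W ^ 2) ^ k` contracts to a product of `k` elements of `W`
    have hq : state p (v ++ [x]) ∈ W ^ k := by
      rw [pow_mul] at hp
      exact state_mem_pow (Subgroup.pow_subset hW) hk k p hp _ (by simp; omega)
    have hr'q : r' * state p (v ++ [x]) ∈ W ^ (2 * k) := by
      rw [two_mul, pow_add]
      exact Set.mul_mem_mul (heq ▸ hr') hq
    refine ⟨h', hh', [], heq ▸ Nat.succ_pos _, 1, by simp, _, hr'q, ?_⟩
    rw [state_nil (Subgroup.pow_subset hW hr'q), mul_one]

lemma leftNest_mem_pow (hW1 : (1 : Aut) ∈ W) (hk0 : 0 < k) (hW : W ⊆ treeAut d)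
    (hWstate : ∀ w ∈ W, ∀ v : Vertex d, state w v ∈ W) (hHW : H ⊆ W)
    (hk : ∀ g ∈ W ^ 2, ∀ v : Vertex d, k ≤ v.length → state g v ∈ W)
    {h : Aut} (hh : h ∈ H) {l : List (Fin d × Aut)} (hl : ∀ p ∈ l, p.2 ∈ H) (x : Fin d) :
    leftNest h l x ∈ W ^ (3 * k) :=
  leftNest_mem_of_forall_mul_state_mem
    (fun _ hg _ hh' x => mul_state_mem_nestInvariant hW hWstate hHW hk hg hh' x)
    (fun _ hg x => state_mem_pow_of_forall_state_mem hW hWstate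
      (nestInvariant_subset_pow hW1 hW hWstate hHW hg) [x])
    l (mem_nestInvariant_of_mem hW1 hk0 hh) hl x

end Contraction

section Nested

variable {d : ℕ}

local notation "Aut" => Equiv.Perm (Vertex d)

theorem leftNest_finite {G : Subgroup Aut} (hG : G ≤ treeAut d) (hss : SelfSimilar G)
    (hc : ContractingGroup G) {H : Set Aut} (hH : H.Finite) (hHG : H ⊆ G) :
    {g : Aut | ∃ h ∈ H, ∃ l : List (Fin d × Aut),
      (∀ p ∈ l, p.2 ∈ H) ∧ ∃ x : Fin d, g = leftNest h l x}.Finite := by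
  obtain ⟨N, hN, hNG, hcon⟩ := hc
  have hSG : insert 1 (N ∪ H) ⊆ (G : Set Aut) :=
    Set.insert_subset G.one_mem (Set.union_subset hNG hHG)
  have hST : insert 1 (N ∪ H) ⊆ (treeAut d : Set Aut) := hSG.trans hG
  set W := stateClosure (insert 1 (N ∪ H))
  have hWfin : W.Finite :=
    ((hN.union hH).insert 1).biUnion fun g hg =>
      finiteState_of_exists_state_mem hN (hcon g (hSG hg))
  have hWG : W ⊆ G := stateClosure_subset hss hSG
  have hSW := subset_stateClosure hST
  obtain ⟨k, hk0, hk⟩ :=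
    exists_forall_state_mem_of_finite hcon (hWfin.pow 2) (Subgroup.pow_subset hWG)
  refine (hWfin.pow (3 * k)).subset ?_
  rintro _ ⟨h, hh, l, hl, x, rfl⟩
  exact leftNest_mem_pow (hSW (Set.mem_insert 1 _)) hk0 (hWG.trans hG)
    (fun _ hw => state_mem_stateClosure hST hw)
    (fun _ hh => hSW (Or.inr (Or.inr hh))) (fun g hg v hv => hSW (Or.inr (Or.inl (hk g hg v hv))))
    hh hl x

lemma exists_leftNest_inv_eq_inv_rightNest {H : Set Aut} (hH : H ⊆ treeAut d) :
    ∀ l : List (Fin d × Aut), (∀ p ∈ l, p.2 ∈ H) → ∀ {h : Aut}, h ∈ treeAut d → ∀ x : Fin d,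
      ∃ (l' : List (Fin d × Aut)) (x' : Fin d),
        (∀ p ∈ l', p.2 ∈ H⁻¹) ∧ leftNest h⁻¹ l' x' = (rightNest h l x)⁻¹
  | [], _, h, hh, x => by
    obtain ⟨y, hy⟩ := exists_apply_singleton hh x
    exact ⟨[], y, by simp, by rw [leftNest, rightNest, state_inv hh, hy]⟩
  | (y, h') :: l, hl, h, hh, x => by
    have hh' : h' ∈ treeAut d := hH (hl _ List.mem_cons_self)
    obtain ⟨l', x', hl', heq⟩ := exists_leftNest_inv_eq_inv_rightNest hH l
      (fun p hp => hl p (List.mem_cons_of_mem _ hp))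
      ((treeAut d).mul_mem (state_mem_treeAut hh [y]) hh') x
    obtain ⟨z, hz⟩ := exists_apply_singleton hh y
    refine ⟨(z, h'⁻¹) :: l', x', List.forall_mem_cons.2 ⟨?_, hl'⟩, ?_⟩
    · simpa using hl _ List.mem_cons_self
    · rw [leftNest, rightNest, ← heq, mul_inv_rev, state_inv hh, hz]

end Nested

theorem nested_products_finite_general
    (d : ℕ) (G : Subgroup (Equiv.Perm (Vertex d)))
    (hG : G ≤ treeAut d) (hss : SelfSimilar G) (hc : ContractingGroup G)
    (H : Set (Equiv.Perm (Vertex d))) (hH : H.Finite) (hHG : H ⊆ (G : Set _)) :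
    {g : Equiv.Perm (Vertex d) | ∃ h ∈ H, ∃ l : List (Fin d × Equiv.Perm (Vertex d)),
        (∀ p ∈ l, p.2 ∈ H) ∧ ∃ x : Fin d, g = leftNest h l x}.Finite ∧
    {g : Equiv.Perm (Vertex d) | ∃ h ∈ H, ∃ l : List (Fin d × Equiv.Perm (Vertex d)),
        (∀ p ∈ l, p.2 ∈ H) ∧ ∃ x : Fin d, g = rightNest h l x}.Finite := by
  refine ⟨leftNest_finite hG hss hc hH hHG, ?_⟩
  have hHinvG : H⁻¹ ⊆ (G : Set _) := by
    rw [Set.inv_subset, inv_coe_set]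
    exact hHG
  refine ((leftNest_finite hG hss hc hH.inv hHinvG).image (·⁻¹)).subset ?_
  rintro _ ⟨h, hh, l, hl, x, rfl⟩
  obtain ⟨l', x', hl', heq⟩ :=
    exists_leftNest_inv_eq_inv_rightNest (fun a ha => hG (hHG ha)) l hl (hG (hHG hh)) x
  exact ⟨_, ⟨h⁻¹, Set.inv_mem_inv.2 hh, l', hl', x', rfl⟩, by rw [heq]; exact inv_inv _⟩

/-- Let `G` be a contracting self-similar subgroup of `Aut(T)`
and `H` a finite subset of `G`.  Then the set of all left-nested products
`(((h₁|_{x₁}·h₂)|_{x₂}·h₃)|_{x₃}·…·h_n)|_{x_n}` with `h_i ∈ H`, `x_i ∈ X` is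
finite, and likewise the set of all right-nested products
`(h_n·…·(h₃·(h₂·h₁|_{x₁})|_{x₂})|_{x₃}…)|_{x_n}` is finite. -/
theorem nested_products_finite
    (d : ℕ) (hd : 2 ≤ d) (G : Subgroup (Equiv.Perm (Vertex d)))
    (hG : G ≤ treeAut d) (hss : SelfSimilar G) (hc : ContractingGroup G)
    (H : Set (Equiv.Perm (Vertex d))) (hH : H.Finite) (hHG : H ⊆ (G : Set _)) :
    {g : Equiv.Perm (Vertex d) | ∃ h ∈ H, ∃ l : List (Fin d × Equiv.Perm (Vertex d)),
        (∀ p ∈ l, p.2 ∈ H) ∧ ∃ x : Fin d, g = leftNest h l x}.Finite ∧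
    {g : Equiv.Perm (Vertex d) | ∃ h ∈ H, ∃ l : List (Fin d × Equiv.Perm (Vertex d)),
        (∀ p ∈ l, p.2 ∈ H) ∧ ∃ x : Fin d, g = rightNest h l x}.Finite :=
  nested_products_finite_general d G hG hss hc H hH hHG
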